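/- In the variable widget of the BSP_r construction (components P_{x_i}, P_{x̄_i} with send vertices s_{x_i}, t_{x_i} and s_{x̄_i}, t_{x̄_i}, and arbitrator component Q_i with receive vertices q_i, r_{x_i}, r_{x̄_i}, where Q_i has exactly one token and the other components none), any colouring sequence may colour at most one of the two vertices t_{x_i}, t_{x̄_i} yellow before vertex q_i is coloured green. -/

import Mathlib

/-! Formal framework: communication graphs and the red/yellow/green colouring game
(Brodsky–Pedersen–Wagner, "On the Complexity of Buffer Allocation in Message Passing Systems"),
with receive-side token pools. -/

inductive Colour : Type
  | red | yellow | green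
deriving DecidableEq

/-- A communication graph: vertices are partitioned into start/send/receive/end vertices,
`pred u v` means `u` is the component predecessor of `v` (a process arc `u → v`),
`matched u v` is a communication arc from send `u` to its matching receive `v`,
`comp v` is the index of the process component of `v`, and `pos v` is the position
of `v` within its component chain. -/
structure CommGraph (V : Type) where
  isStart : V → Prop
  isSend : V → Prop
  isRecv : V → Prop
  isEnd : V → Prop
  pred : V → V → Prop
  matched : V → V → Prop
  comp : V → ℕ
  pos : V → ℕ

namespace CommGraph

variable {V : Type}

/-- An arc of the communication graph (process arc or communication arc). -/
def GArc (G : CommGraph V) (u v : V) : Prop := G.pred u v ∨ G.matched u v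

/-- Well-formedness of a communication graph: the vertex kinds partition `V`,
components are chains (unique predecessors, positions increase along process arcs),
communication arcs go from sends to receives in different components and form a
partial matching, and the graph is acyclic (arcs admit no infinite descent). -/
structure WF (G : CommGraph V) : Prop where
  kinds : ∀ v, G.isStart v ∨ G.isSend v ∨ G.isRecv v ∨ G.isEnd v
  start_not_send : ∀ v, G.isStart v → ¬ G.isSend v
  start_not_recv : ∀ v, G.isStart v → ¬ G.isRecv v
  start_not_end : ∀ v, G.isStart v → ¬ G.isEnd v
  send_not_recv : ∀ v, G.isSend v → ¬ G.isRecv v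
  send_not_end : ∀ v, G.isSend v → ¬ G.isEnd v
  recv_not_end : ∀ v, G.isRecv v → ¬ G.isEnd v
  pred_unique : ∀ {u u' v}, G.pred u v → G.pred u' v → u = u'
  pred_comp : ∀ {u v}, G.pred u v → G.comp u = G.comp v
  pred_pos : ∀ {u v}, G.pred u v → G.pos v = G.pos u + 1
  start_no_pred : ∀ {u v}, G.pred u v → ¬ G.isStart v
  has_pred : ∀ v, ¬ G.isStart v → ∃ u, G.pred u v
  matched_send : ∀ {u v}, G.matched u v → G.isSend u
  matched_recv : ∀ {u v}, G.matched u v → G.isRecv v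
  matched_comp : ∀ {u v}, G.matched u v → G.comp u ≠ G.comp v
  matched_unique_left : ∀ {u u' v}, G.matched u v → G.matched u' v → u = u'
  matched_unique_right : ∀ {u v v'}, G.matched u v → G.matched u v' → v = v'
  send_has_match : ∀ v, G.isSend v → ∃ w, G.matched v w
  recv_has_match : ∀ v, G.isRecv v → ∃ w, G.matched w v
  dag : WellFounded fun u v => G.GArc u v

end CommGraph

/-- A state of the colouring game: the colouring, which receive vertices currently
hold a token on their incident communication arc, and the number of available
tokens in each (per-process, receive-side) pool. -/
structure St (V : Type) where
  col : V → Colour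
  tok : V → Bool
  pool : ℕ → ℕ

/-- The names of the colouring rules. -/
inductive Rule : Type
  | sendYel | recvYel | recvYelTok | sendGrn | recvGrn | endYel | endGrn
deriving DecidableEq

variable {V : Type}

/-- One move of the colouring game (receive-side buffering: the token used by the
buffered-receive rule `recvYelTok` comes from the pool of the receiving component,
and is returned when the receive turns green). -/
inductive Step [DecidableEq V] (G : CommGraph V) : Rule → St V → St V → Prop
  | sendYel {s : St V} {v u : V} :
      G.isSend v → s.col v = .red → G.pred u v → s.col u = .green →
      Step G .sendYel s ⟨Function.update s.col v .yellow, s.tok, s.pool⟩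
  | recvYel {s : St V} {v u w : V} :
      G.isRecv v → s.col v = .red → G.matched w v → s.col w = .yellow →
      G.pred u v → s.col u = .green →
      Step G .recvYel s ⟨Function.update s.col v .yellow, s.tok, s.pool⟩
  | recvYelTok {s : St V} {v w : V} :
      G.isRecv v → s.col v = .red → G.matched w v → s.col w = .yellow →
      0 < s.pool (G.comp v) →
      Step G .recvYelTok s ⟨Function.update s.col v .yellow,
        Function.update s.tok v true,
        Function.update s.pool (G.comp v) (s.pool (G.comp v) - 1)⟩
  | sendGrn {s : St V} {v r : V} :
      G.isSend v → s.col v = .yellow → G.matched v r → s.col r = .yellow →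
      Step G .sendGrn s ⟨Function.update s.col v .green, s.tok, s.pool⟩
  | recvGrn {s : St V} {v u w : V} :
      G.isRecv v → s.col v = .yellow → G.pred u v → s.col u = .green →
      G.matched w v → s.col w = .green →
      Step G .recvGrn s ⟨Function.update s.col v .green,
        Function.update s.tok v false,
        if s.tok v then
          Function.update s.pool (G.comp v) (s.pool (G.comp v) + 1)
        else s.pool⟩
  | endYel {s : St V} {v u : V} :
      G.isEnd v → s.col v = .red → G.pred u v → s.col u = .green →
      Step G .endYel s ⟨Function.update s.col v .yellow, s.tok, s.pool⟩
  | endGrn {s : St V} {v : V} :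
      G.isEnd v → s.col v = .yellow →
      Step G .endGrn s ⟨Function.update s.col v .green, s.tok, s.pool⟩

/-- `IsSeq G s l` : the list `l` of (rule, state) pairs is a valid colouring sequence
starting from state `s`. -/
def IsSeq [DecidableEq V] (G : CommGraph V) : St V → List (Rule × St V) → Prop
  | _, [] => True
  | s, p :: l => Step G p.1 s p.2 ∧ IsSeq G p.2 l

/-- The list of states visited by a colouring sequence. -/
def states (s0 : St V) (l : List (Rule × St V)) : List (St V) :=
  s0 :: l.map Prod.snd

/-- The final state of a colouring sequence. -/
def finalSt (s0 : St V) (l : List (Rule × St V)) : St V :=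
  (states s0 l).getLast (by simp [states])

open Classical in
/-- The initial state: start vertices green, all others red, no tokens placed,
token pools given by the token assignment `B` (pool of component `i` holds `B i`). -/
noncomputable def init (G : CommGraph V) (B : ℕ → ℕ) : St V :=
  ⟨fun v => if G.isStart v then Colour.green else Colour.red, fun _ => false, B⟩

/-- A state from which no colouring rule applies. -/
def MaximalFrom [DecidableEq V] (G : CommGraph V) (s : St V) : Prop :=
  ∀ ρ t, ¬ Step G ρ s t

/-- A state is complete when every vertex is green. -/
def Completes (s : St V) : Prop := ∀ v, s.col v = Colour.green

/-- A deadlocking colouring sequence from `s0`: a maximal sequence whose final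
colouring has a non-green vertex. -/
def Deadlocks [DecidableEq V] (G : CommGraph V) (s0 : St V) (l : List (Rule × St V)) : Prop :=
  IsSeq G s0 l ∧ MaximalFrom G (finalSt s0 l) ∧ ¬ Completes (finalSt s0 l)

/-- The system is safe (deadlock free) under token assignment `B`:
every maximal colouring sequence completes. -/
def DeadlockFree [DecidableEq V] (G : CommGraph V) (B : ℕ → ℕ) : Prop :=
  ∀ l, IsSeq G (init G B) l → MaximalFrom G (finalSt (init G B) l) →
    Completes (finalSt (init G B) l)

/-- A state blocks: some yellow send has a matching red receive to which the
buffered-receive rule cannot be applied (no token available). -/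
def Blocked (G : CommGraph V) (s : St V) : Prop :=
  ∃ v r, G.matched v r ∧ s.col v = Colour.yellow ∧ s.col r = Colour.red ∧
    s.pool (G.comp r) = 0

/-- The graph is block free under token assignment `B`: no colouring sequence blocks. -/
def BlockFree [DecidableEq V] (G : CommGraph V) (B : ℕ → ℕ) : Prop :=
  ∀ l, IsSeq G (init G B) l → ¬ Blocked G (finalSt (init G B) l)

/-! While `q` is not green, neither `r_x` nor `r_x̄` can leave red through its predecessor
(`q`, respectively `r_x`, is not green), so each of them has to take a token from `Q`'s pool,
and no receive of `Q` can turn green to give one back. Hence the pool plus the number of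
non-red vertices among `r_x`, `r_x̄` stays at most its initial value 1. On the other hand,
`t_x` non-red forces `s_x` green, which forces `r_x` non-red, and likewise for `x̄`; so
`t_x` and `t_x̄` cannot both leave red. -/

section Game

variable {G : CommGraph V} {ρ : Rule} {s t : St V} {u v r q rx rx' : V}

-- Only a receive may leave red before its predecessor is green, by taking a token.
structure Causal (G : CommGraph V) (s : St V) : Prop where
  pred_green_of_green : ∀ {u v}, G.pred u v → s.col v = .green → s.col u = .green
  pred_green_of_ne_red : ∀ {u v}, G.pred u v → ¬ G.isRecv v → s.col v ≠ .red → s.col u = .green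
  matched_ne_red_of_green : ∀ {v r}, G.matched v r → s.col v = .green → s.col r ≠ .red

theorem causal_init (hwf : G.WF) (B : ℕ → ℕ) : Causal G (init G B) where
  pred_green_of_green hu hv := by simp_all [init, hwf.start_no_pred hu]
  pred_green_of_ne_red hu _ hv := by simp_all [init, hwf.start_no_pred hu]
  matched_ne_red_of_green {v _} hm hv := by
    have hstart : G.isStart v := by
      by_contra hn
      simp [init, hn] at hv
    exact absurd (hwf.matched_send hm) (hwf.start_not_send v hstart)

def Colour.weight : Colour → ℕ
  | .red => 0
  | _ => 1

theorem Colour.weight_of_ne_red {c : Colour} (hc : c ≠ .red) : c.weight = 1 := by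
  cases c <;> simp_all [Colour.weight]

def arbiterPotential (G : CommGraph V) (q rx rx' : V) (s : St V) : ℕ :=
  s.pool (G.comp q) + (s.col rx).weight + (s.col rx').weight

variable [DecidableEq V]

theorem Step.green_of_green (h : Step G ρ s t) (hv : s.col v = .green) :
    t.col v = .green := by
  cases h <;> grind [Function.update_apply]

theorem Step.ne_red_of_ne_red (h : Step G ρ s t) (hv : s.col v ≠ .red) :
    t.col v ≠ .red := by
  cases h <;> grind [Function.update_apply]

theorem Step.yellow_of_becomes_green (h : Step G ρ s t) (hs : s.col v ≠ .green)
    (ht : t.col v = .green) : s.col v = .yellow := by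
  cases h <;> grind [Function.update_apply]

theorem Step.pred_green_of_recv_becomes_green (hwf : G.WF) (h : Step G ρ s t)
    (hv : G.isRecv v) (hu : G.pred u v) (hs : s.col v ≠ .green) (ht : t.col v = .green) :
    s.col u = .green := by
  cases h <;> grind [Function.update_apply, CommGraph.WF.pred_unique, CommGraph.WF.send_not_recv,
    CommGraph.WF.recv_not_end]

theorem Step.matched_yellow_of_becomes_green (hwf : G.WF) (h : Step G ρ s t)
    (hm : G.matched v r) (hs : s.col v ≠ .green) (ht : t.col v = .green) :
    s.col r = .yellow := by
  have := hwf.matched_send hm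
  cases h <;> grind [Function.update_apply, CommGraph.WF.matched_unique_right,
    CommGraph.WF.send_not_recv, CommGraph.WF.send_not_end]

theorem Step.pred_green_of_leaves_red (hwf : G.WF) (h : Step G ρ s t)
    (hv : ¬ G.isRecv v) (hu : G.pred u v) (hs : s.col v = .red) (ht : t.col v ≠ .red) :
    s.col u = .green := by
  cases h <;> grind [Function.update_apply, CommGraph.WF.pred_unique]

theorem IsSeq.forall_mem_states {P : St V → Prop} (hP : ∀ ρ s t, Step G ρ s t → P s → P t) :
    ∀ {s₀ l}, IsSeq G s₀ l → P s₀ → ∀ st ∈ states s₀ l, P st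
  | _, [], _, h₀, _, hst => by simp_all [states]
  | _, p :: l, ⟨hstep, hl⟩, h₀, st, hst => by
    rcases List.mem_cons.1 hst with rfl | hst
    · exact h₀
    · exact hl.forall_mem_states hP (hP _ _ _ hstep h₀) st hst

theorem Causal.step (hwf : G.WF) (h : Step G ρ s t) (hs : Causal G s) : Causal G t where
  pred_green_of_green {u v} hu hv := by
    refine h.green_of_green ?_
    by_cases hsv : s.col v = .green
    · exact hs.pred_green_of_green hu hsv
    by_cases hrecv : G.isRecv v
    · exact h.pred_green_of_recv_becomes_green hwf hrecv hu hsv hv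
    · exact hs.pred_green_of_ne_red hu hrecv (by simp [h.yellow_of_becomes_green hsv hv])
  pred_green_of_ne_red {u v} hu hrecv hv := by
    refine h.green_of_green ?_
    by_cases hsv : s.col v = .red
    · exact h.pred_green_of_leaves_red hwf hrecv hu hsv hv
    · exact hs.pred_green_of_ne_red hu hrecv hsv
  matched_ne_red_of_green {v r} hm hv := by
    refine h.ne_red_of_ne_red ?_
    by_cases hsv : s.col v = .green
    · exact hs.matched_ne_red_of_green hm hsv
    · simp [h.matched_yellow_of_becomes_green hwf hm hsv hv]

theorem Step.arbiterPotential_le (hwf : G.WF) (hq : G.pred q rx) (hrx : G.pred rx rx')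
    (hrx_recv : G.isRecv rx) (hrx'_recv : G.isRecv rx')
    (honly : ∀ v, G.isRecv v → G.comp v = G.comp q → v = q ∨ v = rx ∨ v = rx')
    (h : Step G ρ s t) (hs : Causal G s) (htq : t.col q ≠ .green) :
    arbiterPotential G q rx rx' t ≤ arbiterPotential G q rx rx' s := by
  have hsq : s.col q ≠ .green := mt h.green_of_green htq
  have hsrx : s.col rx ≠ .green := mt (hs.pred_green_of_green hq) hsq
  have hrx_ne : rx ≠ rx' := by
    rintro rfl
    have := hwf.pred_pos hrx
    omega
  have hcomp : G.comp rx = G.comp q ∧ G.comp rx' = G.comp q :=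
    ⟨(hwf.pred_comp hq).symm, (hwf.pred_comp hrx).symm.trans (hwf.pred_comp hq).symm⟩
  -- Neither `rx` nor `rx'` can use its predecessor, so each of them costs a token.
  have hpred : ∀ {u v}, G.pred u v → s.col u = .green → v ≠ rx ∧ v ≠ rx' := by
    intro u v hu hug
    constructor <;> rintro rfl
    · exact hsq (hwf.pred_unique hu hq ▸ hug)
    · exact hsrx (hwf.pred_unique hu hrx ▸ hug)
  cases h with
  | recvYel _ _ _ _ hu hug =>
    have := hpred hu hug
    grind [arbiterPotential, Function.update_apply]
  | @recvGrn _ v _ _ hv _ hu hug _ _ =>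
    have hcv : G.comp v ≠ G.comp q := by
      intro hc
      rcases honly v hv hc with rfl | rfl | rfl
      · simp at htq
      · exact (hpred hu hug).1 rfl
      · exact (hpred hu hug).2 rfl
    grind [arbiterPotential, Function.update_apply]
  | recvYelTok => grind [arbiterPotential, Function.update_apply, Colour.weight]
  | _ =>
    grind [arbiterPotential, Function.update_apply, CommGraph.WF.send_not_recv,
      CommGraph.WF.recv_not_end]

theorem IsSeq.causal_and_arbiterPotential_le (hwf : G.WF) (hq : G.pred q rx)
    (hrx : G.pred rx rx') (hrx_recv : G.isRecv rx) (hrx'_recv : G.isRecv rx')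
    (honly : ∀ v, G.isRecv v → G.comp v = G.comp q → v = q ∨ v = rx ∨ v = rx')
    {B : ℕ → ℕ} {l : List (Rule × St V)} (hl : IsSeq G (init G B) l) :
    ∀ st ∈ states (init G B) l, Causal G st ∧
      (st.col q ≠ .green → arbiterPotential G q rx rx' st ≤ B (G.comp q)) := by
  refine hl.forall_mem_states (fun _ _ _ h ⟨hs, hpot⟩ => ⟨hs.step hwf h, fun htq =>
    (h.arbiterPotential_le hwf hq hrx hrx_recv hrx'_recv honly hs htq).trans
      (hpot (mt h.green_of_green htq))⟩) ⟨causal_init hwf B, fun _ => ?_⟩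
  simp [arbiterPotential, init, Colour.weight, hwf.start_no_pred hq, hwf.start_no_pred hrx]

end Game

theorem bsp_variable_widget_general {V : Type} [DecidableEq V]
    (G : CommGraph V) (hwf : G.WF) (B : ℕ → ℕ)
    (sx tx sx' tx' q rx rx' : V)
    (hp2 : G.pred sx tx)
    (hp4 : G.pred sx' tx')
    (hq2 : G.pred q rx) (hq3 : G.pred rx rx')
    (htx : G.isSend tx) (htx' : G.isSend tx')
    (hm1 : G.matched sx rx) (hm2 : G.matched sx' rx')
    (honly : ∀ v, G.isRecv v → G.comp v = G.comp q → v = q ∨ v = rx ∨ v = rx')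
    (hBq : B (G.comp q) = 1) :
    ∀ l, IsSeq G (init G B) l → ∀ st ∈ states (init G B) l,
      st.col q ≠ Colour.green → (st.col tx = Colour.red ∨ st.col tx' = Colour.red) := by
  intro l hl st hst hq
  obtain ⟨hs, hpot⟩ := hl.causal_and_arbiterPotential_le hwf hq2 hq3
    (hwf.matched_recv hm1) (hwf.matched_recv hm2) honly st hst
  by_contra! htx_ne
  have hrx : st.col rx ≠ .red := hs.matched_ne_red_of_green hm1
    (hs.pred_green_of_ne_red hp2 (hwf.send_not_recv tx htx) htx_ne.1)
  have hrx' : st.col rx' ≠ .red := hs.matched_ne_red_of_green hm2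
    (hs.pred_green_of_ne_red hp4 (hwf.send_not_recv tx' htx') htx_ne.2)
  have hbound := hpot hq
  simp only [arbiterPotential, Colour.weight_of_ne_red hrx, Colour.weight_of_ne_red hrx',
    hBq] at hbound
  omega

/-- **Variable-widget property of the BSP_r construction.** In the widget with
components `P_x : start → s_x → t_x`, `P_x̄ : start → s_x̄ → t_x̄` and arbitrator
`Q : start → q → r_x → r_x̄` (arcs `(s_x, r_x)`, `(s_x̄, r_x̄)`, `q` matched to an
external send), where `Q`'s pool has exactly one token and the two variable
components have none, any colouring sequence may colour at most one of `t_x`,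
`t_x̄` yellow before `q` is coloured green. -/
theorem bsp_variable_widget {V : Type} [DecidableEq V] [Fintype V]
    (G : CommGraph V) (hwf : G.WF) (B : ℕ → ℕ)
    (stP stP' stQ sx tx sx' tx' q rx rx' sq : V)
    (hstP : G.isStart stP) (hstP' : G.isStart stP') (hstQ : G.isStart stQ)
    (hp1 : G.pred stP sx) (hp2 : G.pred sx tx)
    (hp3 : G.pred stP' sx') (hp4 : G.pred sx' tx')
    (hq1 : G.pred stQ q) (hq2 : G.pred q rx) (hq3 : G.pred rx rx')
    (hsx : G.isSend sx) (htx : G.isSend tx) (hsx' : G.isSend sx') (htx' : G.isSend tx')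
    (hqr : G.isRecv q) (hrx : G.isRecv rx) (hrx' : G.isRecv rx')
    (hm1 : G.matched sx rx) (hm2 : G.matched sx' rx') (hm3 : G.matched sq q)
    (honly : ∀ v, G.isRecv v → G.comp v = G.comp q → v = q ∨ v = rx ∨ v = rx')
    (hBq : B (G.comp q) = 1) (hBp : B (G.comp sx) = 0) (hBp' : B (G.comp sx') = 0)
    (hcomp : G.comp sx ≠ G.comp sx') :
    ∀ l, IsSeq G (init G B) l → ∀ st ∈ states (init G B) l,
      st.col q ≠ Colour.green → (st.col tx = Colour.red ∨ st.col tx' = Colour.red) :=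
  bsp_variable_widget_general G hwf B sx tx sx' tx' q rx rx' hp2 hp4 hq2 hq3 htx htx' hm1 hm2 honly
    hBq
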